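/- Let A be a finite dimensional k-algebra, T = T(A,α) a Hochschild extension, and φ : T → T* a T-bimodule isomorphism with φ(1_T) = (h,c). Then c is an invertible element of A. -/

import Mathlib

/-! Since `1_T` acts trivially on `0 ⊕ A*` from both sides, the bimodule property of `φ` turns
`φ(1_T) = (h,c)` into `φ(0,f)(b,g) = f(bc) = f(cb)`. Injectivity of `φ` on `0 ⊕ A*` then says
that the transposes of `b ↦ bc` and `b ↦ cb` are injective, so both maps are surjective: `c` has
a left and a right inverse. -/

namespace HochschildExtension

variable (k : Type*) [Field k] (A : Type*) [Ring A] [Algebra k A]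

/-- The underlying vector space `A ⊕ A*` of the Hochschild extension `T(A,α)`. -/
abbrev Ext : Type _ := A × Module.Dual k A

/-- The Hochschild 2-cocycle condition for `α : A ⊗ A → A*`, written pointwise using the
dual bimodule structure `(c·f·a)(b) = f(abc)`, i.e. `(a·g)(x) = g(xa)`, `(f·b)(x) = f(bx)`. -/
def IsCocycle (α : A →ₗ[k] A →ₗ[k] Module.Dual k A) : Prop :=
  ∀ a b d x : A, α b d (x * a) - α (a * b) d x + α a (b * d) x - α a b (d * x) = 0

/-- The multiplication of the Hochschild extension `T(A,α)`:
`(a,f)(b,g) = (ab, a·g + f·b + α(a⊗b))`, where `(a·g)(x) = g(xa)` and `(f·b)(x) = f(bx)`. -/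
noncomputable def hmul (α : A →ₗ[k] A →ₗ[k] Module.Dual k A) (p q : Ext k A) : Ext k A :=
  (p.1 * q.1,
    q.2 ∘ₗ LinearMap.mulRight k p.1 + p.2 ∘ₗ LinearMap.mulLeft k q.1 + α p.1 q.1)

/-- The identity element `(1, -α(1⊗1))` of the Hochschild extension `T(A,α)`. -/
noncomputable def hone (α : A →ₗ[k] A →ₗ[k] Module.Dual k A) : Ext k A :=
  (1, -(α 1 1))

/-- `T(A,α)` is a symmetric algebra: there is a `k`-linear bijection
`φ : T(A,α) → T(A,α)*` which is a morphism of `T(A,α)`-bimodules, where `T(A,α)*`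
carries the canonical bimodule structure `(t·ξ·s)(u) = ξ(sut)`. -/
noncomputable def IsSymmetric (α : A →ₗ[k] A →ₗ[k] Module.Dual k A) : Prop :=
  ∃ φ : Ext k A ≃ₗ[k] Module.Dual k (Ext k A),
    ∀ x y u : Ext k A,
      φ (hmul k A α x y) u = φ x (hmul k A α y u) ∧
      φ (hmul k A α y x) u = φ x (hmul k A α u y)

variable {k A}

theorem hmul_hone_inr (α : A →ₗ[k] A →ₗ[k] Module.Dual k A) (f : Module.Dual k A) :
    hmul k A α (hone k A α) (0, f) = (0, f) := by
  ext x <;> simp [hmul, hone]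

theorem hmul_inr_hone (α : A →ₗ[k] A →ₗ[k] Module.Dual k A) (f : Module.Dual k A) :
    hmul k A α (0, f) (hone k A α) = (0, f) := by
  ext x <;> simp [hmul, hone]

theorem hmul_inr_left (α : A →ₗ[k] A →ₗ[k] Module.Dual k A) (f : Module.Dual k A) (b : A)
    (g : Module.Dual k A) : hmul k A α (0, f) (b, g) = (0, f ∘ₗ LinearMap.mulLeft k b) := by
  ext x <;> simp [hmul]

theorem hmul_inr_right (α : A →ₗ[k] A →ₗ[k] Module.Dual k A) (f : Module.Dual k A) (b : A)
    (g : Module.Dual k A) : hmul k A α (b, g) (0, f) = (0, f ∘ₗ LinearMap.mulRight k b) := by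
  ext x <;> simp [hmul]

section Pairing

variable {α : A →ₗ[k] A →ₗ[k] Module.Dual k A} {φ : Ext k A →ₗ[k] Module.Dual k (Ext k A)}
  {h : Module.Dual k A} {c : A}

theorem apply_inr_eq_apply_mul_right
    (hφ : ∀ x y u : Ext k A, φ (hmul k A α x y) u = φ x (hmul k A α y u))
    (hφ1 : ∀ (b : A) (g : Module.Dual k A), φ (hone k A α) (b, g) = h b + g c)
    (f : Module.Dual k A) (b : A) (g : Module.Dual k A) :
    φ (0, f) (b, g) = f (b * c) := by
  rw [← hmul_hone_inr α f, hφ, hmul_inr_left, hφ1]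
  simp

theorem apply_inr_eq_apply_mul_left
    (hφ : ∀ x y u : Ext k A, φ (hmul k A α y x) u = φ x (hmul k A α u y))
    (hφ1 : ∀ (b : A) (g : Module.Dual k A), φ (hone k A α) (b, g) = h b + g c)
    (f : Module.Dual k A) (b : A) (g : Module.Dual k A) :
    φ (0, f) (b, g) = f (c * b) := by
  rw [← hmul_inr_hone α f, hφ, hmul_inr_right, hφ1]
  simp

end Pairing

theorem surjective_of_apply_inr_eq {φ : Ext k A →ₗ[k] Module.Dual k (Ext k A)}
    (hφ : Function.Injective φ) {L : A →ₗ[k] A}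
    (hL : ∀ (f : Module.Dual k A) (b : A) (g : Module.Dual k A), φ (0, f) (b, g) = f (L b)) :
    Function.Surjective L := by
  refine LinearMap.dualMap_injective_iff.mp <| (injective_iff_map_eq_zero _).mpr fun f hf => ?_
  have hφf : φ (0, f) = 0 := LinearMap.ext fun ⟨b, g⟩ => by
    simpa [hL] using LinearMap.congr_fun hf b
  exact congrArg Prod.snd (hφ (hφf.trans (map_zero φ).symm))

theorem claim_three
    (k : Type*) [Field k] (A : Type*) [Ring A] [Algebra k A]
    (α : A →ₗ[k] A →ₗ[k] Module.Dual k A)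
    (φ : Ext k A ≃ₗ[k] Module.Dual k (Ext k A))
    (hφ : ∀ x y u : Ext k A,
      φ (hmul k A α x y) u = φ x (hmul k A α y u) ∧
      φ (hmul k A α y x) u = φ x (hmul k A α u y))
    (h : Module.Dual k A) (c : A)
    (hφ1 : ∀ (b : A) (g : Module.Dual k A), φ (hone k A α) (b, g) = h b + g c) :
    IsUnit c := by
  have hright : Function.Surjective (LinearMap.mulRight k c) :=
    surjective_of_apply_inr_eq (φ := φ.toLinearMap) φ.injective
      (apply_inr_eq_apply_mul_right (fun x y u => (hφ x y u).1) hφ1)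
  have hleft : Function.Surjective (LinearMap.mulLeft k c) :=
    surjective_of_apply_inr_eq (φ := φ.toLinearMap) φ.injective
      (apply_inr_eq_apply_mul_left (fun x y u => (hφ x y u).2) hφ1)
  obtain ⟨d, hd⟩ := hleft 1
  obtain ⟨b, hb⟩ := hright 1
  exact isUnit_iff_exists_and_exists.mpr ⟨⟨d, hd⟩, ⟨b, hb⟩⟩

end HochschildExtension
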